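/- arXiv:math/9502218 — 3 statements merged into one kernel-verified Lean document; each statement's English description precedes it below -/
import Mathlib

section
/- Six Regions, Region 5: for all integers n, k with n ≥ 0 > k, the Roman coefficient satisfies ⌊n choose k⌉ = (-1)^k/(k·C(n-k,n)) = (-1)^k/((k-n)·C(n-k-1,n)) = ⌊n choose n-k⌉, where k and k-n are negative integers, the equalities are of rational numbers, and the pair (n, n-k) lies in the region k' > n' ≥ 0. -/
/-!
Write `n = m` and `k = -(j + 1)` with `m j : ℕ`. Then `⌊k⌉! = (-1)^j / j!` and `⌊n - k⌉! = (m+j+1)!`,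
so `⌊n choose k⌉ = (-1)^j m! j! / (m+j+1)! = (-1)^j / ((j+1) C(m+j+1, m))`. The second closed form
follows from `(j+1) C(m+j+1, m) = (m+j+1) C(m+j, m)`, and the symmetry `k ↔ n - k` is built into
the definition of the Roman coefficient.
-/

def romanFactorial (n : ℤ) : ℚ :=
  if 0 ≤ n then (n.toNat.factorial : ℚ)
  else (-1 : ℚ) ^ (n + 1) / ((-n - 1).toNat.factorial : ℚ)

def romanCoeff (n k : ℤ) : ℚ :=
  romanFactorial n / (romanFactorial k * romanFactorial (n - k))

open Nat

lemma neg_one_zpow_neg_natCast {α : Type*} [DivisionRing α] (q : ℕ) :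
    (-1 : α) ^ (-(q : ℤ)) = (-1) ^ q := by
  rw [zpow_neg, zpow_natCast, ← inv_pow, inv_neg_one]

lemma romanFactorial_natCast (m : ℕ) : romanFactorial m = m ! := by
  simp [romanFactorial]

lemma romanFactorial_neg_succ (j : ℕ) : romanFactorial (-(j + 1)) = (-1) ^ j / j ! := by
  rw [romanFactorial, if_neg (by omega), show -(j + 1 : ℤ) + 1 = -j by ring,
    neg_one_zpow_neg_natCast, show (-(-(j + 1 : ℤ)) - 1).toNat = j by omega]

lemma romanCoeff_sub_right (n k : ℤ) : romanCoeff n (n - k) = romanCoeff n k := by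
  rw [romanCoeff, romanCoeff, sub_sub_cancel, mul_comm]

lemma romanCoeff_natCast_neg_succ (m j : ℕ) :
    romanCoeff m (-(j + 1)) = (-1) ^ j / ((j + 1) * (m + j + 1).choose m) := by
  have hfact : ((m + j + 1).choose m : ℚ) * m ! * (j + 1)! = (m + j + 1)! := by
    rw [add_assoc, Nat.choose_symm_add]
    exact_mod_cast add_choose_mul_factorial_mul_factorial m (j + 1)
  rw [romanCoeff, romanFactorial_natCast, romanFactorial_neg_succ,
    show (m : ℤ) - -(j + 1) = ((m + j + 1 : ℕ) : ℤ) by push_cast; ring, romanFactorial_natCast,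
    ← hfact, factorial_succ]
  have hsq : ((-1 : ℚ) ^ j) ^ 2 = 1 := by rw [← pow_mul, mul_comm, pow_mul, neg_one_sq, one_pow]
  field_simp
  push_cast
  rw [hsq]
  ring

lemma romanCoeff_natCast_neg_succ' (m j : ℕ) :
    romanCoeff m (-(j + 1)) = (-1) ^ j / ((m + j + 1) * (m + j).choose m) := by
  have hchoose : (j + 1) * (m + j + 1).choose m = (m + j + 1) * (m + j).choose m := by
    have h := choose_mul_succ_eq (m + j) m
    rw [show m + j + 1 - m = j + 1 by omega] at h
    linarith
  rw [romanCoeff_natCast_neg_succ]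
  exact_mod_cast congrArg (fun c : ℕ => (-1 : ℚ) ^ j / c) hchoose

/-- Region 5: if `n ≥ 0 > k` then
`⌊n choose k⌉ = (-1)^k/(k C(n-k,n)) = (-1)^k/((k-n) C(n-k-1,n)) = ⌊n choose n-k⌉`,
where the pair `(n, n-k)` lies in the region `k' > n' ≥ 0`. -/
theorem romanCoeff_region5 (n k : ℤ) (h1 : n ≥ 0) (h2 : 0 > k) :
    romanCoeff n k = (-1 : ℚ) ^ k / ((k : ℚ) * ((n - k).toNat.choose n.toNat : ℚ)) ∧
    romanCoeff n k =
      (-1 : ℚ) ^ k / (((k - n : ℤ) : ℚ) * ((n - k - 1).toNat.choose n.toNat : ℚ)) ∧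
    romanCoeff n k = romanCoeff n (n - k) ∧ n - k > n ∧ n ≥ 0 := by
  obtain ⟨m, rfl⟩ := Int.eq_ofNat_of_zero_le h1
  obtain ⟨j, rfl⟩ : ∃ j : ℕ, k = -(j + 1) := ⟨(-k - 1).toNat, by omega⟩
  have hsign : (-1 : ℚ) ^ (-(j + 1 : ℤ)) = -(-1) ^ j := by
    rw [← Nat.cast_succ, neg_one_zpow_neg_natCast, pow_succ, mul_neg_one]
  rw [show ((m : ℤ) - -(j + 1)).toNat = m + j + 1 by omega,
    show ((m : ℤ) - -(j + 1) - 1).toNat = m + j by omega, Int.toNat_natCast, hsign]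
  refine ⟨?_, ?_, (romanCoeff_sub_right _ _).symm, by omega, h1⟩
  · rw [romanCoeff_natCast_neg_succ]
    push_cast
    rw [neg_mul, neg_div_neg_eq]
  · rw [romanCoeff_natCast_neg_succ']
    push_cast
    rw [show -((j : ℚ) + 1) - m = -(m + j + 1) by ring, neg_mul, neg_div_neg_eq]
end

section
/- Knuth's Rotation/Reflection Law: for all integers n and k, (-1)^(k+[k>0])·⌊-n choose k-1⌉ = (-1)^(n+[n>0])·⌊-k choose n-1⌉, where [P] denotes 1 if the condition P holds and 0 otherwise (Iverson bracket). -/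
/-!
The law is a symmetric rewriting of the reflection formula
`⌊-m⌉! · ⌊m - 1⌉! = (-1)^(m + [m > 0])`: multiplying the left-hand side by
`⌊-k⌉! · ⌊k - 1⌉!` and the right-hand side by `⌊-n⌉! · ⌊n - 1⌉!` turns both into
`⌊-n⌉! ⌊-k⌉! / ⌊1 - n - k⌉!`.
-/

@[simp]
theorem romanFactorial_natCast_s14 (n : ℕ) : romanFactorial n = n.factorial := by
  simp [romanFactorial]

theorem romanFactorial_neg_natCast_sub_one (n : ℕ) :
    romanFactorial (-n - 1) = (-1 : ℚ) ^ n / n.factorial := by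
  rw [romanFactorial, if_neg (by omega), show -(-(n : ℤ) - 1) - 1 = n by ring,
    show -(n : ℤ) - 1 + 1 = -n by ring, zpow_neg, zpow_natCast, ← inv_pow, inv_neg_one]
  rfl

theorem romanFactorial_ne_zero (m : ℤ) : romanFactorial m ≠ 0 := by
  rcases le_or_gt 0 m with hm | hm
  · lift m to ℕ using hm
    simp [Nat.factorial_ne_zero]
  · obtain ⟨j, rfl⟩ : ∃ j : ℕ, m = -j - 1 := ⟨(-m - 1).toNat, by omega⟩
    simp [romanFactorial_neg_natCast_sub_one, Nat.factorial_ne_zero]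

theorem romanFactorial_neg_mul_romanFactorial_sub_one (m : ℤ) :
    romanFactorial (-m) * romanFactorial (m - 1) = (-1 : ℚ) ^ (m + if 0 < m then 1 else 0) := by
  rcases le_or_gt m 0 with hm | hm
  · obtain ⟨j, rfl⟩ : ∃ j : ℕ, m = -j := ⟨(-m).toNat, by omega⟩
    rw [neg_neg, romanFactorial_natCast_s14, romanFactorial_neg_natCast_sub_one, if_neg (by omega),
      add_zero, zpow_neg, zpow_natCast, ← inv_pow, inv_neg_one]
    field_simp
  · obtain ⟨j, rfl⟩ : ∃ j : ℕ, m = j + 1 := ⟨(m - 1).toNat, by omega⟩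
    rw [neg_add', romanFactorial_neg_natCast_sub_one, add_sub_cancel_right, romanFactorial_natCast_s14,
      if_pos hm, div_mul_cancel₀ _ (by positivity), add_assoc, zpow_add₀ (by norm_num),
      zpow_natCast]
    norm_num

/-- Knuth's rotation/reflection law:
`(-1)^(k+[k>0]) ⌊-n choose k-1⌉ = (-1)^(n+[n>0]) ⌊-k choose n-1⌉`. -/
theorem romanCoeff_rotation_reflection (n k : ℤ) :
    (-1 : ℚ) ^ (k + (if 0 < k then 1 else 0)) * romanCoeff (-n) (k - 1) =
      (-1 : ℚ) ^ (n + (if 0 < n then 1 else 0)) * romanCoeff (-k) (n - 1) := by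
  rw [← romanFactorial_neg_mul_romanFactorial_sub_one k,
    ← romanFactorial_neg_mul_romanFactorial_sub_one n, romanCoeff, romanCoeff,
    show -n - (k - 1) = -k - (n - 1) by ring]
  field_simp [romanFactorial_ne_zero]
end

section
/- Pascal's Recursion for Gamma-coefficients: for all integers n and k with (n,k) ≠ (0,0), ⟨n choose k⟩ = ⟨n-1 choose k⟩ + ⟨n-1 choose k-1⟩. (The identity fails at n = k = 0, where ⟨0 choose 0⟩ = 1 while ⟨-1 choose -1⟩ + ⟨-1 choose 0⟩ = 2.) -/
/-- Gamma-coefficient of two integers. -/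
def gammaCoeff (n k : ℤ) : ℚ :=
  if (n ≥ k ∧ k ≥ 0) ∨ (k ≥ 0 ∧ 0 > n) ∨ (0 > n ∧ n ≥ k) then romanCoeff n k else 0

lemma F0 : romanFactorial 0 = 1 := by norm_num [romanFactorial]

lemma Fneg1 : romanFactorial (-1) = 1 := by norm_num [romanFactorial]

lemma Fne (n : ℤ) : romanFactorial n ≠ 0 := by
  unfold romanFactorial
  split_ifs with h
  · exact_mod_cast n.toNat.factorial_ne_zero
  · exact div_ne_zero (zpow_ne_zero _ (by norm_num))
      (by exact_mod_cast (-n - 1).toNat.factorial_ne_zero)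

lemma Fsucc (n : ℤ) (hn : n ≠ 0) : romanFactorial n = n * romanFactorial (n - 1) := by
  rcases lt_or_gt_of_ne hn with h | h
  · -- n ≤ -1
    unfold romanFactorial
    rw [if_neg (by omega), if_neg (by omega)]
    have h1 : (-(n - 1) - 1).toNat = (-n - 1).toNat + 1 := by omega
    have h2 : (((-n - 1).toNat : ℚ) + 1) = -(n : ℚ) := by
      have h0 : ((-n - 1).toNat : ℤ) = -n - 1 := Int.toNat_of_nonneg (by omega)
      have h0' : (((-n - 1).toNat : ℤ) : ℚ) = ((-n - 1 : ℤ) : ℚ) := by rw [h0]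
      push_cast at h0' ⊢
      linarith
    have h3 : ((-1 : ℚ)) ^ (n + 1) = -((-1 : ℚ) ^ (n - 1 + 1)) := by
      have : n + 1 = (n - 1 + 1) + 1 := by ring
      rw [this, zpow_add_one₀ (by norm_num : (-1:ℚ) ≠ 0)]
      ring
    rw [h1, h3, Nat.factorial_succ]
    push_cast
    rw [h2]
    have hfac : (((-n - 1).toNat.factorial : ℚ)) ≠ 0 := by
      exact_mod_cast (-n - 1).toNat.factorial_ne_zero
    field_simp
  · -- n ≥ 1
    obtain ⟨m, rfl⟩ : ∃ m : ℕ, n = (m : ℤ) + 1 := ⟨(n - 1).toNat, by omega⟩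
    unfold romanFactorial
    rw [if_pos (by omega), if_pos (by omega)]
    have h1 : ((m : ℤ) + 1).toNat = m + 1 := by omega
    have h2 : ((m : ℤ) + 1 - 1).toNat = m := by omega
    rw [h1, h2, Nat.factorial_succ]
    push_cast
    ring

lemma rc_zero (n : ℤ) : romanCoeff n 0 = 1 := by
  rw [romanCoeff, F0, one_mul, sub_zero, div_self (Fne n)]

lemma rc_self (n : ℤ) : romanCoeff n n = 1 := by
  rw [romanCoeff, sub_self, F0, mul_one, div_self (Fne n)]

lemma rc_pascal (n k : ℤ) (hn : n ≠ 0) (hk : k ≠ 0) (hnk : n ≠ k) :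
    romanCoeff n k = romanCoeff (n - 1) k + romanCoeff (n - 1) (k - 1) := by
  unfold romanCoeff
  rw [Fsucc n hn, Fsucc k hk, Fsucc (n - k) (by omega),
    show n - 1 - k = n - k - 1 by ring, show n - 1 - (k - 1) = n - k by ring,
    Fsucc (n - k) (by omega)]
  have hA := Fne (n - 1)
  have hB := Fne (k - 1)
  have hC := Fne (n - k - 1)
  have hk' : (k : ℚ) ≠ 0 := Int.cast_ne_zero.mpr hk
  have hnk' : ((n : ℚ) - k) ≠ 0 := by
    have : ((n - k : ℤ) : ℚ) ≠ 0 := Int.cast_ne_zero.mpr (by omega)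
    push_cast at this; exact this
  push_cast
  field_simp
  ring

lemma rc_neg_one (k : ℤ) (hk : k ≠ 0) :
    romanCoeff (-1) k = -romanCoeff (-1) (k - 1) := by
  unfold romanCoeff
  rw [Fneg1, Fsucc k hk, show (-1 : ℤ) - k = -k - 1 by ring,
    show (-1 : ℤ) - (k - 1) = -k by ring, Fsucc (-k) (by omega)]
  have hB := Fne (k - 1)
  have hC := Fne (-k - 1)
  have hk' : (k : ℚ) ≠ 0 := Int.cast_ne_zero.mpr hk
  push_cast
  field_simp

/-- Pascal's recursion for Gamma-coefficients: for `(n,k) ≠ (0,0)`,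
`⟨n choose k⟩ = ⟨n-1 choose k⟩ + ⟨n-1 choose k-1⟩`. -/
theorem gammaCoeff_pascal (n k : ℤ) (h : ¬(n = 0 ∧ k = 0)) :
    gammaCoeff n k = gammaCoeff (n - 1) k + gammaCoeff (n - 1) (k - 1) := by
  simp only [gammaCoeff]
  split_ifs with h1 h2 h3 h3' h2' h3'' h3'''
  · -- TTT
    exact rc_pascal n k (by omega) (by omega) (by omega)
  · -- TTF : k = 0
    obtain rfl : k = 0 := by omega
    simp [rc_zero]
  · -- TFT : n = k
    obtain rfl : k = n := by omega
    simp [rc_self]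
  · -- TFF : impossible
    exfalso; omega
  · -- FTT : n = 0
    obtain rfl : n = 0 := by omega
    have hk : k ≠ 0 := by omega
    rw [show (0 : ℤ) - 1 = -1 by ring, rc_neg_one k hk]
    ring
  · -- FTF : impossible
    exfalso; omega
  · -- FFT : impossible
    exfalso; omega
  · norm_num
end
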